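/- arXiv:2403.19326 — 2 statements merged into one kernel-verified Lean document; each statement's English description precedes it below -/
import Mathlib

section
/- The median is robust against a non-majority of malicious samples: for any finite multiset B_ben of n − m real numbers with 1 ≤ m < n/2, the supremum over all multisets B_mal of m real numbers of |med(B_mal ∪ B_ben) − med(B_ben)| is finite; in fact it is bounded above by max(B_ben) − min(B_ben). -/
noncomputable def msMean (S : Multiset ℝ) : ℝ := S.sum / S.card

noncomputable def msMed (S : Multiset ℝ) : ℝ :=
  let l := S.sort (· ≤ ·)
  if l.length % 2 = 1 then l.getD (l.length / 2) 0
  else (l.getD (l.length / 2 - 1) 0 + l.getD (l.length / 2) 0) / 2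

noncomputable def msMin (S : Multiset ℝ) : ℝ := (S.sort (· ≤ ·)).getD 0 0

noncomputable def msMax (S : Multiset ℝ) : ℝ := (S.sort (· ≤ ·)).getD (S.card - 1) 0

private lemma sort_sorted' (S : Multiset ℝ) : (S.sort (· ≤ ·)).Pairwise (· ≤ ·) :=
  S.pairwise_sort _

private lemma countP_sort (p : ℝ → Prop) [DecidablePred p] (S : Multiset ℝ) :
    (S.sort (· ≤ ·)).countP (fun b => decide (p b)) = S.countP p := by
  rw [← Multiset.coe_countP, Multiset.sort_eq]

/-- If fewer than `k+1` elements of `S` are `< c`, then the `k`-th sorted element is `≥ c`. -/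
private lemma sorted_getD_ge (S : Multiset ℝ) (c : ℝ) (k : ℕ) (hk : k < Multiset.card S)
    (hcount : S.countP (fun x => x < c) ≤ k) :
    c ≤ (S.sort (· ≤ ·)).getD k 0 := by
  set L := S.sort (· ≤ ·) with hL
  have hlen : L.length = Multiset.card S := Multiset.length_sort _
  have hkL : k < L.length := hlen ▸ hk
  by_contra hlt
  push_neg at hlt
  have hall : ∀ a ∈ L.take (k + 1), (fun x => decide (x < c)) a = true := by
    intro a ha
    obtain ⟨i, hi, rfl⟩ := List.mem_iff_getElem.1 ha
    have hi' : i < k + 1 := by simp [List.length_take] at hi; omega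
    rw [List.getElem_take]
    have hiL : i < L.length := by omega
    have : L[i] ≤ L[k] := by
      have := (sort_sorted' S).rel_get_of_le
        (a := ⟨i, hL ▸ hiL⟩) (b := ⟨k, hL ▸ hkL⟩) (by exact Nat.le_of_lt_succ hi')
      simpa [List.get_eq_getElem] using this
    have : L[i] < c := lt_of_le_of_lt this (by
      have := List.getD_eq_getElem L 0 hkL
      rw [← this]; exact hlt)
    simpa using this
  have h1 : (L.take (k + 1)).countP (fun x => decide (x < c)) = (L.take (k + 1)).length :=
    List.countP_eq_length.2 hall
  have h2 : (L.take (k + 1)).length = k + 1 := by rw [List.length_take]; omega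
  have h3 : (L.take (k + 1)).countP (fun x => decide (x < c)) ≤
      L.countP (fun x => decide (x < c)) :=
    (List.take_sublist _ _).countP_le
  rw [countP_sort (fun x => x < c) S] at h3
  omega

/-- If fewer than `card - k` elements of `S` are `> c`, then the `k`-th sorted element is `≤ c`. -/
private lemma sorted_getD_le (S : Multiset ℝ) (c : ℝ) (k : ℕ) (hk : k < Multiset.card S)
    (hcount : S.countP (fun x => c < x) ≤ Multiset.card S - k - 1) :
    (S.sort (· ≤ ·)).getD k 0 ≤ c := by
  set L := S.sort (· ≤ ·) with hL
  have hlen : L.length = Multiset.card S := Multiset.length_sort _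
  have hkL : k < L.length := hlen ▸ hk
  by_contra hlt
  push_neg at hlt
  have hall : ∀ a ∈ L.drop k, (fun x => decide (c < x)) a = true := by
    intro a ha
    obtain ⟨i, hi, rfl⟩ := List.mem_iff_getElem.1 ha
    have hki : k + i < L.length := by simp [List.length_drop] at hi; omega
    have heq : (L.drop k)[i] = L[k + i]'hki := List.getElem_drop
    rw [heq]
    have : L[k] ≤ L[k + i] := by
      have := (sort_sorted' S).rel_get_of_le
        (a := ⟨k, hkL⟩) (b := ⟨k + i, hki⟩) (by simp)
      simpa [List.get_eq_getElem] using this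
    have : c < L[k + i] := lt_of_lt_of_le (by
      have := List.getD_eq_getElem L 0 hkL
      rw [← this]; exact hlt) this
    simpa using this
  have h1 : (L.drop k).countP (fun x => decide (c < x)) = (L.drop k).length :=
    List.countP_eq_length.2 hall
  have h2 : (L.drop k).length = L.length - k := by simp
  have h3 : (L.drop k).countP (fun x => decide (c < x)) ≤
      L.countP (fun x => decide (c < x)) :=
    (List.drop_sublist _ _).countP_le
  rw [countP_sort (fun x => c < x) S] at h3
  omega

private lemma msMin_le_getD (S : Multiset ℝ) (k : ℕ) (hk : k < Multiset.card S) :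
    msMin S ≤ (S.sort (· ≤ ·)).getD k 0 := by
  have hlen : (S.sort (· ≤ ·)).length = Multiset.card S := Multiset.length_sort _
  have hkL : k < (S.sort (· ≤ ·)).length := hlen ▸ hk
  have h0 : 0 < (S.sort (· ≤ ·)).length := lt_of_le_of_lt (Nat.zero_le _) hkL
  unfold msMin
  rw [List.getD_eq_getElem _ 0 h0, List.getD_eq_getElem _ 0 hkL]
  have := (sort_sorted' S).rel_get_of_le (a := ⟨0, h0⟩) (b := ⟨k, hkL⟩) (by simp)
  simpa [List.get_eq_getElem] using this

private lemma getD_le_msMax (S : Multiset ℝ) (k : ℕ) (hk : k < Multiset.card S) :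
    (S.sort (· ≤ ·)).getD k 0 ≤ msMax S := by
  have hlen : (S.sort (· ≤ ·)).length = Multiset.card S := Multiset.length_sort _
  have hkL : k < (S.sort (· ≤ ·)).length := hlen ▸ hk
  have hl : Multiset.card S - 1 < (S.sort (· ≤ ·)).length := by omega
  unfold msMax
  rw [List.getD_eq_getElem _ 0 hl, List.getD_eq_getElem _ 0 hkL]
  have := (sort_sorted' S).rel_get_of_le (a := ⟨k, hkL⟩)
    (b := ⟨Multiset.card S - 1, hl⟩) (by simp; omega)
  simpa [List.get_eq_getElem] using this

private lemma msMed_mem (S : Multiset ℝ) (hS : S ≠ 0) :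
    msMin S ≤ msMed S ∧ msMed S ≤ msMax S := by
  have hcard : 0 < Multiset.card S := Multiset.card_pos.2 hS
  have hlen : (S.sort (· ≤ ·)).length = Multiset.card S := Multiset.length_sort _
  unfold msMed
  simp only [hlen]
  set N := Multiset.card S with hN
  by_cases hpar : N % 2 = 1
  · simp only [hpar, if_pos]
    exact ⟨msMin_le_getD S _ (by omega), getD_le_msMax S _ (by omega)⟩
  · simp only [hpar, if_neg (by omega : ¬ N % 2 = 1), if_false]
    constructor
    · have h1 := msMin_le_getD S (N / 2 - 1) (by omega)
      have h2 := msMin_le_getD S (N / 2) (by omega)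
      linarith
    · have h1 := getD_le_msMax S (N / 2 - 1) (by omega)
      have h2 := getD_le_msMax S (N / 2) (by omega)
      linarith

theorem med_robust_nonmajority
    (n m : ℕ) (hm : 1 ≤ m) (hmaj : 2 * m < n)
    (B_ben : Multiset ℝ) (hben : Multiset.card B_ben = n - m) :
    ∀ B_mal : Multiset ℝ, Multiset.card B_mal = m →
      |msMed (B_mal + B_ben) - msMed B_ben| ≤ msMax B_ben - msMin B_ben := by
  intro B_mal hmal
  have hben_ne : B_ben ≠ 0 := by
    intro h
    rw [h] at hben
    simp at hben
    omega
  -- every benign element is within [msMin B_ben, msMax B_ben]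
  have hmem_ge : ∀ x ∈ B_ben, msMin B_ben ≤ x := by
    intro x hx
    have hx' : x ∈ B_ben.sort (· ≤ ·) := by
      rw [← Multiset.mem_sort (· ≤ ·)] at hx; exact hx
    obtain ⟨i, hi, rfl⟩ := List.mem_iff_getElem.1 hx'
    have hlen : (B_ben.sort (· ≤ ·)).length = Multiset.card B_ben := Multiset.length_sort _
    have := msMin_le_getD B_ben i (by omega)
    rwa [List.getD_eq_getElem _ 0 hi] at this
  have hmem_le : ∀ x ∈ B_ben, x ≤ msMax B_ben := by
    intro x hx
    have hx' : x ∈ B_ben.sort (· ≤ ·) := by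
      rw [← Multiset.mem_sort (· ≤ ·)] at hx; exact hx
    obtain ⟨i, hi, rfl⟩ := List.mem_iff_getElem.1 hx'
    have hlen : (B_ben.sort (· ≤ ·)).length = Multiset.card B_ben := Multiset.length_sort _
    have := getD_le_msMax B_ben i (by omega)
    rwa [List.getD_eq_getElem _ 0 hi] at this
  set C := B_mal + B_ben with hC
  have hcardC : Multiset.card C = n := by
    rw [hC, Multiset.card_add, hmal, hben]; omega
  -- counting bounds on the combined multiset
  have hcount_lt : C.countP (fun x => x < msMin B_ben) ≤ m := by
    rw [hC, Multiset.countP_add]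
    have h1 : B_mal.countP (fun x => x < msMin B_ben) ≤ m := by
      rw [← hmal]; exact Multiset.countP_le_card _ _
    have h2 : B_ben.countP (fun x => x < msMin B_ben) = 0 :=
      Multiset.countP_eq_zero.2 (fun a ha => not_lt.2 (hmem_ge a ha))
    omega
  have hcount_gt : C.countP (fun x => msMax B_ben < x) ≤ m := by
    rw [hC, Multiset.countP_add]
    have h1 : B_mal.countP (fun x => msMax B_ben < x) ≤ m := by
      rw [← hmal]; exact Multiset.countP_le_card _ _
    have h2 : B_ben.countP (fun x => msMax B_ben < x) = 0 :=
      Multiset.countP_eq_zero.2 (fun a ha => not_lt.2 (hmem_le a ha))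
    omega
  -- the median of C lies in [msMin B_ben, msMax B_ben]
  have hbound : ∀ k, m ≤ k → k ≤ n - m - 1 →
      msMin B_ben ≤ (C.sort (· ≤ ·)).getD k 0 ∧
      (C.sort (· ≤ ·)).getD k 0 ≤ msMax B_ben := by
    intro k hk1 hk2
    have hkc : k < Multiset.card C := by omega
    constructor
    · exact sorted_getD_ge C _ k hkc (le_trans hcount_lt hk1)
    · exact sorted_getD_le C _ k hkc (by rw [hcardC]; omega)
  have hmedC : msMin B_ben ≤ msMed C ∧ msMed C ≤ msMax B_ben := by
    unfold msMed
    have hlen : (C.sort (· ≤ ·)).length = n := by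
      rw [Multiset.length_sort]; exact hcardC
    simp only [hlen]
    by_cases hpar : n % 2 = 1
    · simp only [hpar, if_pos]
      exact hbound (n / 2) (by omega) (by omega)
    · simp only [hpar, if_neg (by omega : ¬ n % 2 = 1), if_false]
      have h1 := hbound (n / 2 - 1) (by omega) (by omega)
      have h2 := hbound (n / 2) (by omega) (by omega)
      constructor <;> [linarith [h1.1, h2.1]; linarith [h1.2, h2.2]]
  have hmedB := msMed_mem B_ben hben_ne
  rw [abs_sub_le_iff]
  constructor <;> linarith [hmedC.1, hmedC.2, hmedB.1, hmedB.2]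
end

section
/- The coordinate-wise median in R^C is robust: let B_ben be a multiset of n − m vectors in R^C and B_mal any multiset of m vectors in R^C with 1 ≤ m < n/2. Then ‖cwmed(B_mal ∪ B_ben) − cwmed(B_ben)‖₂ is bounded above by a constant depending only on B_ben (e.g., by √C times the maximum over coordinates k of (max of k-th coordinates of B_ben − min of k-th coordinates of B_ben)), uniformly over all choices of B_mal. -/
noncomputable def vMean {C : ℕ} (S : Multiset (EuclideanSpace ℝ (Fin C))) :
    EuclideanSpace ℝ (Fin C) := (Multiset.card S : ℝ)⁻¹ • S.sum

noncomputable def cwMed {C : ℕ} (S : Multiset (EuclideanSpace ℝ (Fin C))) :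
    EuclideanSpace ℝ (Fin C) := WithLp.toLp 2 (fun k => msMed (S.map fun v => v k))

lemma msMin_le {S : Multiset ℝ} {x : ℝ} (hx : x ∈ S) : msMin S ≤ x := by
  have hx' : x ∈ S.sort (· ≤ ·) := (Multiset.mem_sort _).mpr hx
  obtain ⟨j, hj, rfl⟩ := List.mem_iff_getElem.mp hx'
  have h0 : 0 < (S.sort (· ≤ ·)).length := by omega
  rw [msMin, List.getD_eq_getElem _ _ h0]
  have := (Multiset.pairwise_sort S (· ≤ ·)).rel_get_of_le
    (a := ⟨0, h0⟩) (b := ⟨j, hj⟩) (by simp [Fin.le_def])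
  simpa using this

lemma le_msMax {S : Multiset ℝ} {x : ℝ} (hx : x ∈ S) : x ≤ msMax S := by
  have hx' : x ∈ S.sort (· ≤ ·) := (Multiset.mem_sort _).mpr hx
  obtain ⟨j, hj, rfl⟩ := List.mem_iff_getElem.mp hx'
  have hlen : (S.sort (· ≤ ·)).length = Multiset.card S := Multiset.length_sort _
  have h0 : Multiset.card S - 1 < (S.sort (· ≤ ·)).length := by omega
  rw [msMax, List.getD_eq_getElem _ _ h0]
  have := (Multiset.pairwise_sort S (· ≤ ·)).rel_get_of_le
    (a := ⟨j, hj⟩) (b := ⟨Multiset.card S - 1, h0⟩) (by simp [Fin.le_def]; omega)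
  simpa using this

lemma key_lb (T S : Multiset ℝ) (i : ℕ)
    (hi : i < ((T + S).sort (· ≤ ·)).length)
    (h1 : Multiset.card T ≤ i) :
    msMin S ≤ ((T + S).sort (· ≤ ·)).getD i 0 := by
  by_contra hcon
  push_neg at hcon
  set l := (T + S).sort (· ≤ ·) with hl
  rw [List.getD_eq_getElem _ _ hi] at hcon
  have hsorted : l.Pairwise (· ≤ ·) := Multiset.pairwise_sort _ _
  -- all elements of l.take (i+1) are < msMin S
  have htake : (l.take (i + 1)).countP (fun x => decide (x < msMin S))
      = (l.take (i + 1)).length := by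
    rw [List.countP_eq_length]
    intro a ha
    obtain ⟨j, hj, rfl⟩ := List.mem_iff_getElem.mp ha
    have hj' : j < i + 1 := by
      have h' : (l.take (i + 1)).length ≤ i + 1 := by
        rw [List.length_take]; exact min_le_left _ _
      omega
    have hji : j < l.length := by omega
    rw [List.getElem_take]
    have hle : l[j] ≤ l[i] := by
      have := hsorted.rel_get_of_le (a := ⟨j, hji⟩) (b := ⟨i, hi⟩)
        (by simp [Fin.le_def]; omega)
      simpa using this
    simp only [decide_eq_true_eq]
    exact lt_of_le_of_lt hle hcon
  have hlen_take : (l.take (i + 1)).length = i + 1 := by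
    rw [List.length_take]; omega
  have hcnt : i + 1 ≤ l.countP (fun x => decide (x < msMin S)) := by
    calc i + 1 = (l.take (i + 1)).countP (fun x => decide (x < msMin S)) := by
          rw [htake, hlen_take]
      _ ≤ l.countP _ := List.Sublist.countP_le (List.take_sublist _ _)
  -- multiset count
  have hms : l.countP (fun x => decide (x < msMin S))
      = Multiset.countP (fun x : ℝ => x < msMin S) (T + S) := by
    conv_rhs => rw [← Multiset.sort_eq (T + S) (· ≤ ·)]
    rw [Multiset.coe_countP]
  have hS0 : Multiset.countP (fun x : ℝ => x < msMin S) S = 0 := by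
    rw [Multiset.countP_eq_zero]
    intro a ha
    simp only [decide_eq_true_eq, not_lt]
    exact msMin_le ha
  have hT : Multiset.countP (fun x : ℝ => x < msMin S) T ≤ Multiset.card T :=
    Multiset.countP_le_card _ _
  rw [hms, Multiset.countP_add, hS0, add_zero] at hcnt
  omega

lemma key_ub (T S : Multiset ℝ) (i : ℕ)
    (h2 : i + Multiset.card T < ((T + S).sort (· ≤ ·)).length) :
    ((T + S).sort (· ≤ ·)).getD i 0 ≤ msMax S := by
  by_contra hcon
  push_neg at hcon
  set l := (T + S).sort (· ≤ ·) with hl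
  have hi : i < l.length := by omega
  rw [List.getD_eq_getElem _ _ hi] at hcon
  have hsorted : l.Pairwise (· ≤ ·) := Multiset.pairwise_sort _ _
  have hdrop : (l.drop i).countP (fun x => decide (msMax S < x))
      = (l.drop i).length := by
    rw [List.countP_eq_length]
    intro a ha
    obtain ⟨j, hj, rfl⟩ := List.mem_iff_getElem.mp ha
    have hlen_drop : (l.drop i).length = l.length - i := List.length_drop
    have hij : i + j < l.length := by omega
    rw [List.getElem_drop]
    have hle : l[i] ≤ l[i + j] := by
      have := hsorted.rel_get_of_le (a := ⟨i, hi⟩) (b := ⟨i + j, hij⟩)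
        (by simp [Fin.le_def])
      simpa using this
    simp only [decide_eq_true_eq]
    exact lt_of_lt_of_le hcon hle
  have hlen_drop : (l.drop i).length = l.length - i := List.length_drop
  have hcnt : l.length - i ≤ l.countP (fun x => decide (msMax S < x)) := by
    calc l.length - i = (l.drop i).countP (fun x => decide (msMax S < x)) := by
          rw [hdrop, hlen_drop]
      _ ≤ l.countP _ := List.Sublist.countP_le (List.drop_sublist _ _)
  have hms : l.countP (fun x => decide (msMax S < x))
      = Multiset.countP (fun x : ℝ => msMax S < x) (T + S) := by
    conv_rhs => rw [← Multiset.sort_eq (T + S) (· ≤ ·)]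
    rw [Multiset.coe_countP]
  have hS0 : Multiset.countP (fun x : ℝ => msMax S < x) S = 0 := by
    rw [Multiset.countP_eq_zero]
    intro a ha
    simp only [decide_eq_true_eq, not_lt]
    exact le_msMax ha
  have hT : Multiset.countP (fun x : ℝ => msMax S < x) T ≤ Multiset.card T :=
    Multiset.countP_le_card _ _
  rw [hms, Multiset.countP_add, hS0, add_zero] at hcnt
  omega

lemma msMed_bounds (T S : Multiset ℝ)
    (h : 2 * Multiset.card T < Multiset.card T + Multiset.card S) :
    msMin S ≤ msMed (T + S) ∧ msMed (T + S) ≤ msMax S := by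
  have hlen : ((T + S).sort (· ≤ ·)).length = Multiset.card T + Multiset.card S := by
    rw [Multiset.length_sort, Multiset.card_add]
  rw [msMed]
  split_ifs with hpar
  · constructor
    · exact key_lb T S _ (by omega) (by omega)
    · exact key_ub T S _ (by omega)
  · have h1 := key_lb T S (((T + S).sort (· ≤ ·)).length / 2 - 1) (by omega) (by omega)
    have h2 := key_lb T S (((T + S).sort (· ≤ ·)).length / 2) (by omega) (by omega)
    have h3 := key_ub T S (((T + S).sort (· ≤ ·)).length / 2 - 1) (by omega)
    have h4 := key_ub T S (((T + S).sort (· ≤ ·)).length / 2) (by omega)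
    constructor <;> linarith

lemma msMed_self_bounds (S : Multiset ℝ) (h : 0 < Multiset.card S) :
    msMin S ≤ msMed S ∧ msMed S ≤ msMax S := by
  have := msMed_bounds 0 S (by simpa using h)
  simpa using this

theorem cwmed_robust
    (C : ℕ) (hC : 0 < C) (n m : ℕ) (hm : 1 ≤ m) (hmaj : 2 * m < n)
    (B_ben : Multiset (EuclideanSpace ℝ (Fin C)))
    (hben : Multiset.card B_ben = n - m) :
    ∀ B_mal : Multiset (EuclideanSpace ℝ (Fin C)), Multiset.card B_mal = m →
      ‖cwMed (B_mal + B_ben) - cwMed B_ben‖ ≤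
        Real.sqrt C *
          Finset.univ.sup' (Finset.univ_nonempty_iff.mpr (Fin.pos_iff_nonempty.mp hC))
            (fun k => msMax (B_ben.map fun v => v k) - msMin (B_ben.map fun v => v k)) := by
  intro B_mal hmal
  set D := Finset.univ.sup' (Finset.univ_nonempty_iff.mpr (Fin.pos_iff_nonempty.mp hC))
      (fun k => msMax (B_ben.map fun v => v k) - msMin (B_ben.map fun v => v k)) with hD
  have hbcard : 0 < Multiset.card B_ben := by omega
  -- per-coordinate bound
  have hcoord : ∀ k : Fin C,
      |cwMed (B_mal + B_ben) k - cwMed B_ben k|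
        ≤ msMax (B_ben.map fun v => v k) - msMin (B_ben.map fun v => v k) := by
    intro k
    set Sb := B_ben.map fun v => v k with hSb
    set Sm := B_mal.map fun v => v k with hSm
    have hcb : Multiset.card Sb = n - m := by rw [hSb, Multiset.card_map, hben]
    have hcm : Multiset.card Sm = m := by rw [hSm, Multiset.card_map, hmal]
    have hmap : (B_mal + B_ben).map (fun v => v k) = Sm + Sb := Multiset.map_add _ _ _
    have h1 := msMed_bounds Sm Sb (by rw [hcb, hcm]; omega)
    have h2 := msMed_self_bounds Sb (by rw [hcb]; omega)
    have : cwMed (B_mal + B_ben) k = msMed (Sm + Sb) := by rw [cwMed, PiLp.toLp_apply, hmap]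
    rw [this]
    have : cwMed B_ben k = msMed Sb := rfl
    rw [this]
    rw [abs_sub_le_iff]
    constructor <;> linarith [h1.1, h1.2, h2.1, h2.2]
  -- each coordinate bound ≤ D
  have hcoordD : ∀ k : Fin C, |cwMed (B_mal + B_ben) k - cwMed B_ben k| ≤ D := by
    intro k
    refine le_trans (hcoord k) ?_
    exact Finset.le_sup'
      (f := fun k => msMax (B_ben.map fun v => v k) - msMin (B_ben.map fun v => v k))
      (Finset.mem_univ k)
  have hDnonneg : 0 ≤ D := le_trans (abs_nonneg _) (hcoordD ⟨0, hC⟩)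
  -- norm bound
  rw [EuclideanSpace.norm_eq]
  have hsum : ∑ k : Fin C, ‖(cwMed (B_mal + B_ben) - cwMed B_ben) k‖ ^ 2 ≤ C * D ^ 2 := by
    calc ∑ k : Fin C, ‖(cwMed (B_mal + B_ben) - cwMed B_ben) k‖ ^ 2
        ≤ ∑ _k : Fin C, D ^ 2 := by
          apply Finset.sum_le_sum
          intro k _
          have : (cwMed (B_mal + B_ben) - cwMed B_ben) k
              = cwMed (B_mal + B_ben) k - cwMed B_ben k := rfl
          rw [this, Real.norm_eq_abs]
          exact pow_le_pow_left₀ (abs_nonneg _) (hcoordD k) 2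
      _ = C * D ^ 2 := by simp [mul_comm]
  calc Real.sqrt (∑ k : Fin C, ‖(cwMed (B_mal + B_ben) - cwMed B_ben) k‖ ^ 2)
      ≤ Real.sqrt (C * D ^ 2) := Real.sqrt_le_sqrt hsum
    _ = Real.sqrt C * D := by
        rw [Real.sqrt_mul (Nat.cast_nonneg C), Real.sqrt_sq hDnonneg]
end
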